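/- arXiv:2009.01146 — 2 statements merged into one kernel-verified Lean document; each statement's English description precedes it below -/
import Mathlib

section
/- If f, g : ℝ² → ℝ are smooth 2π-biperiodic functions satisfying ∂f/∂y(x,y) − f(x,y) = f(x,y)·∂g/∂x(x,y) for all (x,y) ∈ ℝ², then f has a zero, i.e. there exists (x₀, y₀) ∈ ℝ² with f(x₀, y₀) = 0. -/
/-!
If `f` never vanished, the equation would say `∂_y log |f| = 1 + ∂_x g`. Integrate this over the
period square `[0, 2π]²`: by periodicity of `f` in `y` the left side has zero integral in `y`,
and by periodicity of `g` in `x` the term `∂_x g` has zero integral in `x`. Fubini then gives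
`0 = 4π²`.
-/

open Real

/-- A function `u : ℝ² → ℝ` (curried) is smooth if it is `C^∞` as a function on `ℝ × ℝ`. -/
def Smooth2 (u : ℝ → ℝ → ℝ) : Prop :=
  ContDiff ℝ (⊤ : ℕ∞) fun p : ℝ × ℝ => u p.1 p.2

/-- A function `u : ℝ² → ℝ` is 2π-biperiodic if `u(x+2π, y) = u(x,y) = u(x, y+2π)`. -/
def Biperiodic (u : ℝ → ℝ → ℝ) : Prop :=
  ∀ x y : ℝ, u (x + 2 * π) y = u x y ∧ u x (y + 2 * π) = u x y

/-- A function `v : ℝ → ℝ` is 2π-periodic if `v(x+2π) = v(x)` for all `x`. -/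
def Periodic2pi (v : ℝ → ℝ) : Prop := ∀ x : ℝ, v (x + 2 * π) = v x

/-- Partial derivative in the first variable. -/
noncomputable def pderivX (u : ℝ → ℝ → ℝ) : ℝ → ℝ → ℝ :=
  fun x y => deriv (fun t => u t y) x

/-- Partial derivative in the second variable. -/
noncomputable def pderivY (u : ℝ → ℝ → ℝ) : ℝ → ℝ → ℝ :=
  fun x y => deriv (fun t => u x t) y

open Function MeasureTheory

section PartialDerivatives

variable {u : ℝ → ℝ → ℝ}

lemma hasDerivAt_fderiv_apply_one_zero {x y : ℝ}
    (hu : DifferentiableAt ℝ (fun p : ℝ × ℝ => u p.1 p.2) (x, y)) :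
    HasDerivAt (fun t => u t y) (fderiv ℝ (fun p : ℝ × ℝ => u p.1 p.2) (x, y) (1, 0)) x :=
  hu.hasFDerivAt.comp_hasDerivAt (f := fun t => (t, y)) x
    ((hasDerivAt_id x).prodMk (hasDerivAt_const x y))

lemma hasDerivAt_pderivX {x y : ℝ}
    (hu : DifferentiableAt ℝ (fun p : ℝ × ℝ => u p.1 p.2) (x, y)) :
    HasDerivAt (fun t => u t y) (pderivX u x y) x :=
  (hasDerivAt_fderiv_apply_one_zero hu).differentiableAt.hasDerivAt

lemma hasDerivAt_pderivY {x y : ℝ}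
    (hu : DifferentiableAt ℝ (fun p : ℝ × ℝ => u p.1 p.2) (x, y)) :
    HasDerivAt (fun t => u x t) (pderivY u x y) y :=
  (hu.comp (f := fun t => (x, t)) y
    ((differentiableAt_const x).prodMk differentiableAt_id)).hasDerivAt

lemma continuous_pderivX (hu : ContDiff ℝ 1 fun p : ℝ × ℝ => u p.1 p.2) :
    Continuous (uncurry (pderivX u)) := by
  have hd := hu.differentiable one_ne_zero
  have : uncurry (pderivX u) = fun p => fderiv ℝ (fun p : ℝ × ℝ => u p.1 p.2) p (1, 0) :=
    funext fun p => (hasDerivAt_fderiv_apply_one_zero (hd p)).deriv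
  rw [this]
  exact (hu.continuous_fderiv one_ne_zero).clm_apply continuous_const

end PartialDerivatives

lemma intervalIntegral_eq_zero_of_hasDerivAt {F F' : ℝ → ℝ} {a b : ℝ}
    (hF : ∀ t, HasDerivAt F (F' t) t) (hF' : IntervalIntegrable F' volume a b)
    (hab : F b = F a) : ∫ t in a..b, F' t = 0 := by
  rw [intervalIntegral.integral_eq_sub_of_hasDerivAt (fun t _ => hF t) hF', hab, sub_self]

lemma Continuous.intervalIntegral_intervalIntegral_swap {F : ℝ → ℝ → ℝ}
    (hF : Continuous (uncurry F)) (a b c d : ℝ) :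
    ∫ x in a..b, ∫ y in c..d, F x y = ∫ y in c..d, ∫ x in a..b, F x y :=
  MeasureTheory.intervalIntegral_intervalIntegral_swap <|
    (hF.continuousOn.integrableOn_compact (isCompact_uIcc.prod isCompact_uIcc)).mono_set
      (Set.prod_mono Set.uIoc_subset_uIcc Set.uIoc_subset_uIcc)

lemma hasDerivAt_log_of_pderivY_sub_eq_mul {f g : ℝ → ℝ → ℝ} {x y : ℝ}
    (hf : DifferentiableAt ℝ (fun p : ℝ × ℝ => f p.1 p.2) (x, y)) (hfxy : f x y ≠ 0)
    (heq : pderivY f x y - f x y = f x y * pderivX g x y) :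
    HasDerivAt (fun t => log (f x t)) (1 + pderivX g x y) y := by
  convert (hasDerivAt_pderivY hf).log hfxy using 1
  rw [eq_div_iff hfxy]
  linear_combination -heq

/-- Any smooth 2π-biperiodic functions `f, g` satisfying `∂f/∂y − f = f·∂g/∂x` everywhere
are such that `f` has a zero. -/
theorem solution_has_zero (f g : ℝ → ℝ → ℝ)
    (hf : Smooth2 f) (hfp : Biperiodic f) (hg : Smooth2 g) (hgp : Biperiodic g)
    (heq : ∀ x y, pderivY f x y - f x y = f x y * pderivX g x y) :
    ∃ x₀ y₀ : ℝ, f x₀ y₀ = 0 := by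
  by_contra! hne
  have hfd := hf.differentiable (by simp)
  have hgd := hg.differentiable (by simp)
  have hgx : Continuous (uncurry (pderivX g)) := continuous_pderivX (hg.of_le (by simp))
  have hx_int : ∀ y, IntervalIntegrable (pderivX g · y) volume 0 (2 * π) :=
    fun y => (hgx.comp (Continuous.prodMk_left y)).intervalIntegrable _ _
  have hinner_y : ∀ x, ∫ y in 0..2 * π, (1 + pderivX g x y) = 0 := fun x =>
    intervalIntegral_eq_zero_of_hasDerivAt
      (fun y => hasDerivAt_log_of_pderivY_sub_eq_mul (hfd _) (hne x y) (heq x y))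
      (intervalIntegrable_const.add
        ((hgx.comp (Continuous.prodMk_right x)).intervalIntegrable _ _))
      (congrArg log (by simpa using (hfp x 0).2))
  have hinner_x : ∀ y, ∫ x in 0..2 * π, (1 + pderivX g x y) = 2 * π := fun y => by
    rw [intervalIntegral.integral_add intervalIntegrable_const (hx_int y),
      intervalIntegral_eq_zero_of_hasDerivAt (fun x => hasDerivAt_pderivX (hgd _)) (hx_int y)
        (by simpa using (hgp 0 y).1)]
    simp
  have hswap := Continuous.intervalIntegral_intervalIntegral_swap
    (F := fun x y => 1 + pderivX g x y) (by exact continuous_const.add hgx) 0 (2 * π) 0 (2 * π)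
  simp [hinner_y, hinner_x, pi_ne_zero] at hswap
end

section
/- Let a : ℝ² → ℝ be a smooth 2π-biperiodic function and f : ℝ → ℝ a smooth 2π-periodic function. Then the following are equivalent: (i) there exist smooth maps A, F : ℝ × ℝ² → ℝ, 2π-biperiodic in the last two variables for each fixed first variable, with A(0,x,y) = 0, F(0,x,y) = 0, ∂A/∂s(0,x,y) = a(x,y), ∂F/∂s(0,x,y) = f(x), and ∂F/∂y(s,x,y) = F(s,x,y)·∂A/∂x(s,x,y) for all (s,x,y) ∈ ℝ × ℝ²; (ii) f(x)·(d/dx)(∫₀^{2π} a(x,y) dy) = 0 for all x ∈ ℝ. -/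
open Real

/-! For fixed `x`, the functions `u(s,y) = F(s,x,y)` and `v(s,y) = ∂ₓA(s,x,y)` satisfy
`∂_y u = u v`, so periodicity in `y` gives `∫₀^{2π} u v dy = 0` for every `s`. Both `u` and `v`
vanish at `s = 0`, so the second `s`-derivative of this integral at `s = 0` is
`2 f(x) ∫₀^{2π} ∂ₛ∂ₓA(0,x,y) dy`, which by symmetry of mixed partials is
`2 f(x) (d/dx) ∫₀^{2π} a(x,y) dy`.

Conversely, with `h(x,y) = ∫₀^y ∂ₓa(x,t) dt` the pair `A = s a`, `F = s f(x) exp(s h)` solves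
`∂_y F = F ∂ₓA`. In `y`, `h` is periodic only up to the additive jump `(d/dx) ∫₀^{2π} a(x,t) dt`;
since `f(x)` times that jump vanishes, `F` is periodic all the same. -/

open MeasureTheory
open scoped ContDiff

section ParametricIntegral

universe u

-- `H` and `E` share a universe so that the induction below can pass from `E` to `H →L[ℝ] E`.
variable {H E : Type u} [NormedAddCommGroup H] [NormedSpace ℝ H] [ProperSpace H]
  [NormedAddCommGroup E] [NormedSpace ℝ E]

theorem hasFDerivAt_intervalIntegral_of_contDiff {K : H × ℝ → E} (hK : ContDiff ℝ 1 K)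
    (a b : ℝ) (x₀ : H) :
    HasFDerivAt (fun x => ∫ t in a..b, K (x, t))
      (∫ t in a..b, (fderiv ℝ K (x₀, t)).comp (ContinuousLinearMap.inl ℝ H ℝ)) x₀ := by
  set K' : H → ℝ → H →L[ℝ] E := fun x t => (fderiv ℝ K (x, t)).comp (.inl ℝ H ℝ)
  have hK'_cont : Continuous fun p : H × ℝ => K' p.1 p.2 :=
    (hK.continuous_fderiv one_ne_zero).clm_comp continuous_const
  obtain ⟨C, hC⟩ := ((isCompact_closedBall x₀ 1).prod isCompact_uIcc).exists_bound_of_continuousOn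
    hK'_cont.continuousOn
  refine intervalIntegral.hasFDerivAt_integral_of_dominated_of_fderiv_le
    (F := fun x t => K (x, t)) (F' := K') (bound := fun _ => C)
    (Metric.ball_mem_nhds x₀ one_pos) ?_ ?_ ?_ ?_ (intervalIntegrable_const (μ := volume)) ?_
  · exact .of_forall fun x => (hK.continuous.comp (.prodMk_right x)).aestronglyMeasurable
  · exact (hK.continuous.comp (.prodMk_right x₀)).intervalIntegrable a b
  · exact (hK'_cont.comp (.prodMk_right x₀)).aestronglyMeasurable
  · exact .of_forall fun t ht x hx =>
      hC (x, t) ⟨Metric.ball_subset_closedBall hx, Set.uIoc_subset_uIcc ht⟩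
  · refine .of_forall fun t _ x _ => ?_
    exact ((hK.differentiable one_ne_zero (x, t)).hasFDerivAt).comp x (hasFDerivAt_prodMk_left x t)

theorem contDiff_intervalIntegral_of_contDiff {n : ℕ} {K : H × ℝ → E} (hK : ContDiff ℝ n K)
    (a b : ℝ) : ContDiff ℝ n fun x => ∫ t in a..b, K (x, t) := by
  induction n generalizing E with
  | zero =>
    rw [Nat.cast_zero, contDiff_zero] at hK ⊢
    exact intervalIntegral.continuous_parametric_intervalIntegral_of_continuous'
      (f := fun x t => K (x, t)) hK a b
  | succ n ih =>
    have hK' : ContDiff ℝ n fun q => (fderiv ℝ K q).comp (ContinuousLinearMap.inl ℝ H ℝ) :=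
      (hK.fderiv_right (by push_cast; rfl)).clm_comp contDiff_const
    have hK1 : ContDiff ℝ 1 K := hK.of_le (by exact_mod_cast Nat.le_add_left 1 n)
    rw [Nat.cast_add, Nat.cast_one, contDiff_succ_iff_fderiv]
    refine ⟨fun x => (hasFDerivAt_intervalIntegral_of_contDiff hK1 a b x).differentiableAt,
      fun h => absurd h (by simp), ?_⟩
    rw [funext fun x => (hasFDerivAt_intervalIntegral_of_contDiff hK1 a b x).fderiv]
    exact ih hK'

theorem contDiff_infty_intervalIntegral_of_contDiff {K : H × ℝ → E} (hK : ContDiff ℝ ∞ K)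
    (a b : ℝ) : ContDiff ℝ ∞ fun x => ∫ t in a..b, K (x, t) :=
  contDiff_infty.2 fun _ =>
    contDiff_intervalIntegral_of_contDiff (hK.of_le (WithTop.coe_le_coe.2 le_top)) a b

end ParametricIntegral

section PartialDerivatives

variable {E F : Type*} [NormedAddCommGroup E] [NormedSpace ℝ E]
  [NormedAddCommGroup F] [NormedSpace ℝ F]

theorem deriv_comp_prodMk_left_eq_fderiv {W : ℝ × E → F} {x : ℝ} {e : E}
    (hW : DifferentiableAt ℝ W (x, e)) :
    deriv (fun t => W (t, e)) x = fderiv ℝ W (x, e) (1, 0) :=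
  (hW.hasFDerivAt.comp_hasDerivAt x ((hasDerivAt_id x).prodMk (hasDerivAt_const x e))).deriv

theorem deriv_comp_prodMk_right_eq_fderiv {W : E × ℝ → F} {e : E} {y : ℝ}
    (hW : DifferentiableAt ℝ W (e, y)) :
    deriv (fun t => W (e, t)) y = fderiv ℝ W (e, y) (0, 1) :=
  (hW.hasFDerivAt.comp_hasDerivAt y ((hasDerivAt_const y e).prodMk (hasDerivAt_id y))).deriv

theorem ContDiff.deriv_fst {W : ℝ × E → F} {m n : WithTop ℕ∞} (hW : ContDiff ℝ n W)
    (hmn : m + 1 ≤ n) : ContDiff ℝ m fun p : ℝ × E => deriv (fun t => W (t, p.2)) p.1 := by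
  have hn : n ≠ 0 := by rintro rfl; simp at hmn
  simp_rw [deriv_comp_prodMk_left_eq_fderiv (hW.differentiable hn _)]
  exact (hW.fderiv_right hmn).clm_apply contDiff_const

end PartialDerivatives

theorem pderivX_eq_fderiv {u : ℝ → ℝ → ℝ} {x y : ℝ}
    (hu : DifferentiableAt ℝ (Function.uncurry u) (x, y)) :
    pderivX u x y = fderiv ℝ (Function.uncurry u) (x, y) (1, 0) :=
  deriv_comp_prodMk_left_eq_fderiv hu

theorem pderivY_eq_fderiv {u : ℝ → ℝ → ℝ} {x y : ℝ}
    (hu : DifferentiableAt ℝ (Function.uncurry u) (x, y)) :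
    pderivY u x y = fderiv ℝ (Function.uncurry u) (x, y) (0, 1) :=
  deriv_comp_prodMk_right_eq_fderiv hu

theorem pderivX_pderivY_comm {u : ℝ → ℝ → ℝ} (hu : ContDiff ℝ 2 (Function.uncurry u))
    (x y : ℝ) :
    pderivX (pderivY u) x y = pderivY (pderivX u) x y := by
  set D := fderiv ℝ (Function.uncurry u)
  have hD : Differentiable ℝ D := (hu.fderiv_right (m := 1) le_rfl).differentiable one_ne_zero
  have hDe : ∀ e : ℝ × ℝ, Differentiable ℝ fun p => D p e := fun e p =>
    (hD p).clm_apply (differentiableAt_const e)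
  have hY : Function.uncurry (pderivY u) = fun p => D p (0, 1) :=
    funext fun p => pderivY_eq_fderiv (hu.differentiable two_ne_zero p)
  have hX : Function.uncurry (pderivX u) = fun p => D p (1, 0) :=
    funext fun p => pderivX_eq_fderiv (hu.differentiable two_ne_zero p)
  calc pderivX (pderivY u) x y = fderiv ℝ (fun p => D p (0, 1)) (x, y) (1, 0) := by
        rw [pderivX_eq_fderiv (by rw [hY]; exact hDe _ _), hY]
    _ = fderiv ℝ D (x, y) (1, 0) (0, 1) := by
        rw [fderiv_clm_apply (hD _) (differentiableAt_const _)]; simp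
    _ = fderiv ℝ D (x, y) (0, 1) (1, 0) := hu.contDiffAt.isSymmSndFDerivAt (by simp) _ _
    _ = fderiv ℝ (fun p => D p (1, 0)) (x, y) (0, 1) := by
        rw [fderiv_clm_apply (hD _) (differentiableAt_const _)]; simp
    _ = pderivY (pderivX u) x y := by
        rw [pderivY_eq_fderiv (by rw [hX]; exact hDe _ _), hX]

theorem hasDerivAt_intervalIntegral_of_contDiff {K : ℝ → ℝ → ℝ}
    (hK : ContDiff ℝ 1 (Function.uncurry K)) (a b x₀ : ℝ) :
    HasDerivAt (fun x => ∫ t in a..b, K x t) (∫ t in a..b, pderivX K x₀ t) x₀ := by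
  have hL : Continuous fun t =>
      (fderiv ℝ (Function.uncurry K) (x₀, t)).comp (ContinuousLinearMap.inl ℝ ℝ ℝ) :=
    ((hK.continuous_fderiv one_ne_zero).comp (.prodMk_right x₀)).clm_comp continuous_const
  have h := (hasFDerivAt_intervalIntegral_of_contDiff hK a b x₀).hasDerivAt
  rw [ContinuousLinearMap.intervalIntegral_apply (hL.intervalIntegrable a b)] at h
  refine h.congr_deriv (intervalIntegral.integral_congr fun t _ => ?_)
  simp [pderivX_eq_fderiv (hK.differentiable one_ne_zero (x₀, t))]

theorem deriv_deriv_mul_of_eq_zero {g h : ℝ → ℝ} {s₀ : ℝ} (hg : Differentiable ℝ g)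
    (hh : Differentiable ℝ h) (hg' : DifferentiableAt ℝ (deriv g) s₀)
    (hh' : DifferentiableAt ℝ (deriv h) s₀) (hg₀ : g s₀ = 0) (hh₀ : h s₀ = 0) :
    deriv (deriv fun s => g s * h s) s₀ = 2 * deriv g s₀ * deriv h s₀ := by
  have hgh : deriv (fun s => g s * h s) = fun s => deriv g s * h s + g s * deriv h s :=
    funext fun s => deriv_mul (hg s) (hh s)
  have hd : HasDerivAt (fun s => deriv g s * h s + g s * deriv h s)
      (deriv (deriv g) s₀ * h s₀ + deriv g s₀ * deriv h s₀ +
        (deriv g s₀ * deriv h s₀ + g s₀ * deriv (deriv h) s₀)) s₀ :=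
    (hg'.hasDerivAt.mul (hh s₀).hasDerivAt).add ((hg s₀).hasDerivAt.mul hh'.hasDerivAt)
  rw [hgh, hd.deriv, hg₀, hh₀]
  ring

namespace Smooth2

variable {u : ℝ → ℝ → ℝ}

theorem contDiff (hu : Smooth2 u) {n : ℕ∞} : ContDiff ℝ n (Function.uncurry u) :=
  hu.of_le (WithTop.coe_le_coe.2 le_top)

theorem hasDerivAt_pderivX (hu : Smooth2 u) (x y : ℝ) :
    HasDerivAt (fun t => u t y) (pderivX u x y) x :=
  DifferentiableAt.hasDerivAt <|
    ((hu.contDiff (n := 1)).differentiable one_ne_zero (x, y)).comp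
      (f := fun t => (t, y)) x (differentiableAt_id.prodMk (differentiableAt_const y))

theorem hasDerivAt_pderivY (hu : Smooth2 u) (x y : ℝ) :
    HasDerivAt (fun t => u x t) (pderivY u x y) y :=
  DifferentiableAt.hasDerivAt <|
    ((hu.contDiff (n := 1)).differentiable one_ne_zero (x, y)).comp
      (f := fun t => (x, t)) y ((differentiableAt_const x).prodMk differentiableAt_id)

theorem continuous_snd (hu : Smooth2 u) (x : ℝ) : Continuous fun t => u x t :=
  hu.continuous.comp (.prodMk_right x)

theorem deriv_intervalIntegral (hu : Smooth2 u) (a b x : ℝ) :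
    deriv (fun t => ∫ y in a..b, u t y) x = ∫ y in a..b, pderivX u x y :=
  (hasDerivAt_intervalIntegral_of_contDiff hu.contDiff a b x).deriv

theorem integral_pderivX_eq_zero (hu : Smooth2 u) {a b : ℝ}
    (h : ∀ s, ∫ y in a..b, u s y = 0) (s : ℝ) : ∫ y in a..b, pderivX u s y = 0 := by
  rw [← hu.deriv_intervalIntegral]
  simp only [h, deriv_const']

theorem primitive (hu : Smooth2 u) : Smooth2 fun x y => ∫ t in (0 : ℝ)..y, u x t := by
  have hrescale : (fun p : ℝ × ℝ => ∫ t in (0 : ℝ)..p.2, u p.1 t) =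
      fun p => p.2 * ∫ r in (0 : ℝ)..1, u p.1 (r * p.2) := by
    funext p
    simp
  have hK : ContDiff ℝ ∞ fun q : (ℝ × ℝ) × ℝ => u q.1.1 (q.2 * q.1.2) :=
    hu.comp ((contDiff_fst.comp contDiff_fst).prodMk
      (contDiff_snd.mul (contDiff_snd.comp contDiff_fst)))
  show ContDiff ℝ ∞ fun p : ℝ × ℝ => ∫ t in (0 : ℝ)..p.2, u p.1 t
  rw [hrescale]
  exact contDiff_snd.mul (contDiff_infty_intervalIntegral_of_contDiff hK 0 1)

theorem pderivX (hu : Smooth2 u) : Smooth2 (pderivX u) :=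
  ContDiff.deriv_fst (W := Function.uncurry u) hu (by simp)

end Smooth2

theorem Biperiodic.pderivX {u : ℝ → ℝ → ℝ} (hu : Biperiodic u) : Biperiodic (pderivX u) := by
  intro x y
  constructor
  · show deriv (fun t => u t y) (x + 2 * π) = deriv (fun t => u t y) x
    rw [← deriv_comp_add_const]
    simp only [(hu _ y).1]
  · show deriv (fun t => u t (y + 2 * π)) x = deriv (fun t => u t y) x
    simp only [(hu _ y).2]

def IsSmoothExtension (a : ℝ → ℝ → ℝ) (f : ℝ → ℝ) (A F : ℝ → ℝ → ℝ → ℝ) : Prop :=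
  ContDiff ℝ (⊤ : ℕ∞) (fun p : ℝ × ℝ × ℝ => A p.1 p.2.1 p.2.2) ∧
    ContDiff ℝ (⊤ : ℕ∞) (fun p : ℝ × ℝ × ℝ => F p.1 p.2.1 p.2.2) ∧
    (∀ s : ℝ, Biperiodic (A s)) ∧ (∀ s : ℝ, Biperiodic (F s)) ∧
    (∀ x y : ℝ, A 0 x y = 0) ∧ (∀ x y : ℝ, F 0 x y = 0) ∧
    (∀ x y : ℝ, deriv (fun s => A s x y) 0 = a x y) ∧
    (∀ x y : ℝ, deriv (fun s => F s x y) 0 = f x) ∧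
    (∀ s x y : ℝ, pderivY (F s) x y = F s x y * pderivX (A s) x y)

theorem IsSmoothExtension.mul_deriv_integral_eq_zero {a : ℝ → ℝ → ℝ} {f : ℝ → ℝ}
    {A F : ℝ → ℝ → ℝ → ℝ} (hAF : IsSmoothExtension a f A F) (ha : Smooth2 a) (x : ℝ) :
    f x * deriv (fun t => ∫ y in (0 : ℝ)..(2 * π), a t y) x = 0 := by
  obtain ⟨hA, hF, -, hFp, hA0, hF0, hA1, hF1, hPDE⟩ := hAF
  set u : ℝ → ℝ → ℝ := fun s y => F s x y
  set v : ℝ → ℝ → ℝ := fun s y => pderivX (A s) x y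
  have hu : Smooth2 u := hF.comp (contDiff_fst.prodMk (contDiff_const.prodMk contDiff_snd))
  have hv : Smooth2 v :=
    (ContDiff.deriv_fst (W := fun q : ℝ × ℝ × ℝ => A q.2.1 q.1 q.2.2)
      (hA.comp (contDiff_snd.fst.prodMk (contDiff_fst.prodMk contDiff_snd.snd))) (by simp)).comp
      (contDiff_const.prodMk contDiff_id)
  have huv : Smooth2 fun s y => u s y * v s y := hu.mul hv
  have h_int : ∀ s, ∫ y in (0 : ℝ)..(2 * π), u s y * v s y = 0 := fun s => by
    rw [intervalIntegral.integral_eq_sub_of_hasDerivAt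
      (fun y _ => hPDE s x y ▸ hu.hasDerivAt_pderivY s y)
      ((huv.continuous_snd s).intervalIntegrable _ _)]
    simpa using sub_eq_zero.2 (hFp s x 0).2
  have h_second :
      ∀ y, pderivX (pderivX fun s y => u s y * v s y) 0 y = 2 * f x * pderivX a x y := by
    intro y
    have hv0 : v 0 y = 0 := by
      show deriv (fun t => A 0 t y) x = 0
      simp [hA0]
    have hg : Smooth2 fun s t => A s t y :=
      hA.comp (contDiff_fst.prodMk (contDiff_snd.prodMk contDiff_const))
    have hv1 : pderivX v 0 y = pderivX a x y := by
      refine (pderivX_pderivY_comm hg.contDiff 0 x).trans ?_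
      simp only [pderivY, pderivX, hA1]
    rw [← hF1 x y, ← hv1]
    exact deriv_deriv_mul_of_eq_zero (fun s => (hu.hasDerivAt_pderivX s y).differentiableAt)
      (fun s => (hv.hasDerivAt_pderivX s y).differentiableAt)
      (hu.pderivX.hasDerivAt_pderivX 0 y).differentiableAt
      (hv.pderivX.hasDerivAt_pderivX 0 y).differentiableAt (hF0 x y) hv0
  have h_int2 := huv.pderivX.integral_pderivX_eq_zero (huv.integral_pderivX_eq_zero h_int) 0
  simp only [h_second, intervalIntegral.integral_const_mul] at h_int2
  rw [ha.deriv_intervalIntegral]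
  linarith

theorem exists_isSmoothExtension {a : ℝ → ℝ → ℝ} {f : ℝ → ℝ} (ha : Smooth2 a)
    (hap : Biperiodic a) (hf : ContDiff ℝ (⊤ : ℕ∞) f) (hfp : Periodic2pi f)
    (hcond : ∀ x, f x * deriv (fun t => ∫ y in (0 : ℝ)..(2 * π), a t y) x = 0) :
    ∃ A F, IsSmoothExtension a f A F := by
  set h : ℝ → ℝ → ℝ := fun x y => ∫ t in (0 : ℝ)..y, pderivX a x t
  have hh : Smooth2 h := ha.pderivX.primitive
  have hax : Biperiodic (pderivX a) := hap.pderivX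
  have hh_y : ∀ x y, HasDerivAt (fun t => h x t) (pderivX a x y) y := fun x y =>
    ((ha.pderivX.continuous_snd x).integral_hasStrictDerivAt 0 y).hasDerivAt
  have hh_x : ∀ x y, h (x + 2 * π) y = h x y := fun x y =>
    intervalIntegral.integral_congr fun t _ => (hax x t).1
  have hh_y_per : ∀ x y, f x = 0 ∨ h x (y + 2 * π) = h x y := by
    intro x y
    have hjump : h x (y + 2 * π) = h x y + ∫ t in (0 : ℝ)..(2 * π), pderivX a x t := by
      simpa using Function.Periodic.intervalIntegral_add_eq_add (fun t => (hax x t).2) 0 y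
        fun _ _ => (ha.pderivX.continuous_snd x).intervalIntegrable _ _
    rw [hjump, add_eq_left, ← ha.deriv_intervalIntegral]
    exact mul_eq_zero.1 (hcond x)
  refine ⟨fun s x y => s * a x y, fun s x y => s * f x * exp (s * h x y),
    contDiff_fst.mul (ha.comp contDiff_snd),
    (contDiff_fst.mul (hf.comp contDiff_snd.fst)).mul
      (contDiff_exp.comp (contDiff_fst.mul (hh.comp contDiff_snd))),
    fun s x y => ⟨by simp only [(hap x y).1], by simp only [(hap x y).2]⟩,
    fun s x y => ⟨by simp only [hfp x, hh_x], ?_⟩,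
    fun x y => zero_mul _, fun x y => by simp, fun x y => (hasDerivAt_mul_const _).deriv, ?_, ?_⟩
  · rcases hh_y_per x y with h0 | h0 <;> simp [h0]
  · intro x y
    have hd : HasDerivAt (fun s => s * f x * exp (s * h x y))
        (1 * f x * exp (0 * h x y) + 0 * f x * (exp (0 * h x y) * h x y)) 0 :=
      ((hasDerivAt_id' 0).mul_const (f x)).mul (hasDerivAt_mul_const (h x y)).exp
    simpa using hd.deriv
  · intro s x y
    have hF' : HasDerivAt (fun t => s * f x * exp (s * h x t))
        (s * f x * (exp (s * h x y) * (s * pderivX a x y))) y :=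
      ((hh_y x y).const_mul s).exp.const_mul (s * f x)
    have hA' : HasDerivAt (fun t => s * a t y) (s * pderivX a x y) x :=
      (ha.hasDerivAt_pderivX x y).const_mul s
    show deriv (fun t => s * f x * exp (s * h x t)) y =
      s * f x * exp (s * h x y) * deriv (fun t => s * a t y) x
    rw [hF'.deriv, hA'.deriv]
    ring

/-- A first order deformation `(a, f)` extends to a smooth path of solutions iff
`f(x) · (d/dx)(∫₀^{2π} a(x,y) dy) = 0` for all `x`. -/
theorem extendable_iff_derivative_vanishes (a : ℝ → ℝ → ℝ) (ha : Smooth2 a)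
    (hap : Biperiodic a) (f : ℝ → ℝ) (hf : ContDiff ℝ (⊤ : ℕ∞) f) (hfp : Periodic2pi f) :
    (∃ A F : ℝ → ℝ → ℝ → ℝ,
      ContDiff ℝ (⊤ : ℕ∞) (fun p : ℝ × ℝ × ℝ => A p.1 p.2.1 p.2.2) ∧
      ContDiff ℝ (⊤ : ℕ∞) (fun p : ℝ × ℝ × ℝ => F p.1 p.2.1 p.2.2) ∧
      (∀ s : ℝ, Biperiodic (A s)) ∧ (∀ s : ℝ, Biperiodic (F s)) ∧
      (∀ x y : ℝ, A 0 x y = 0) ∧ (∀ x y : ℝ, F 0 x y = 0) ∧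
      (∀ x y : ℝ, deriv (fun s => A s x y) 0 = a x y) ∧
      (∀ x y : ℝ, deriv (fun s => F s x y) 0 = f x) ∧
      (∀ s x y : ℝ, pderivY (F s) x y = F s x y * pderivX (A s) x y)) ↔
    (∀ x : ℝ, f x * deriv (fun t => ∫ y in (0:ℝ)..(2 * π), a t y) x = 0) :=
  ⟨fun ⟨_, _, hAF⟩ => IsSmoothExtension.mul_deriv_integral_eq_zero hAF ha,
    exists_isSmoothExtension ha hap hf hfp⟩
end
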